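/- The test φ_{θ₀,p} rejecting when S_p(Z, θ₀) > c_{p,α}, where c_{p,α} is the (1-α)-quantile of S_p(Z, 0) under μ = 0, has size exactly α over the null {μ : min_j μ(j) ≥ θ₀}: sup_{μ : min_j μ(j) ≥ θ₀} P_μ(S_p(Z, θ₀) > c_{p,α}) = P_0(S_p(Z, 0) > c_{p,α}) ≤ α. -/

import Mathlib

open MeasureTheory ProbabilityTheory
open scoped ENNReal NNReal Topology

/-- The law of `Z ~ N(μ, I_k)`: product of one-dimensional Gaussians. -/
noncomputable def gaussPi (k : ℕ) (μ : Fin k → ℝ) : Measure (Fin k → ℝ) :=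
  Measure.pi (fun j => gaussianReal (μ j) 1)

/-- `θ̄(μ) = min_j μ(j)`. -/
noncomputable def thetaBar {k : ℕ} (μ : Fin k → ℝ) : ℝ := ⨅ j, μ j

/-- The `τ`-quantile of the statistic `S` under the measure `P`. -/
noncomputable def quantile {k : ℕ} (P : Measure (Fin k → ℝ)) (S : (Fin k → ℝ) → ℝ)
    (τ : ℝ) : ℝ :=
  sInf (setOf (fun t : ℝ => τ ≤ (P (setOf (fun z => S z ≤ t))).toReal))

/-- One-sided `L^p` statistic `S_p(z, θ₀)`, `p ∈ [1, ∞]` (`p = ∞` gives the max statistic). -/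
noncomputable def SpE (k : ℕ) (p : ℝ≥0∞) (z : Fin k → ℝ) (θ : ℝ) : ℝ :=
  if p = ∞ then ⨆ j, max (θ - z j) 0
  else (∑ j, (max (θ - z j) 0) ^ p.toReal) ^ (1 / p.toReal)

instance gaussPi_prob (k : ℕ) (μ : Fin k → ℝ) : IsProbabilityMeasure (gaussPi k μ) := by
  unfold gaussPi; infer_instance

open Filter in
lemma aux_measurable_SpE (k : ℕ) (hk : 0 < k) (p : ℝ≥0∞) (θ : ℝ) :
    Measurable (fun z : Fin k → ℝ => SpE k p z θ) := by
  have : Nonempty (Fin k) := Fin.pos_iff_nonempty.mp hk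
  have hmax : ∀ j : Fin k, Measurable (fun z : Fin k → ℝ => max (θ - z j) 0) :=
    fun j => (measurable_const.sub (measurable_pi_apply j)).max measurable_const
  unfold SpE
  split_ifs with h
  · have heq : (fun z : Fin k → ℝ => ⨆ j, max (θ - z j) 0)
        = fun z => Finset.univ.sup' Finset.univ_nonempty (fun j : Fin k => max (θ - z j) 0) := by
      funext z; rw [Finset.sup'_univ_eq_ciSup]
    rw [heq]
    have := Finset.measurable_sup' (Finset.univ_nonempty (α := Fin k))
      (f := fun j : Fin k => fun z : Fin k → ℝ => max (θ - z j) 0) (fun j _ => hmax j)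
    convert this using 1
    funext z
    rw [Finset.sup'_apply]
  · have hsum : Measurable (fun z : Fin k → ℝ => ∑ j, (max (θ - z j) 0) ^ p.toReal) :=
      Finset.measurable_sum Finset.univ fun j _ =>
        (Real.continuous_rpow_const ENNReal.toReal_nonneg).measurable.comp (hmax j)
    exact (Real.continuous_rpow_const (by positivity)).measurable.comp hsum

lemma aux_SpE_mono (k : ℕ) (hk : 0 < k) (p : ℝ≥0∞) {z z' : Fin k → ℝ} {θ θ' : ℝ}
    (h : ∀ j, max (θ - z j) 0 ≤ max (θ' - z' j) 0) : SpE k p z θ ≤ SpE k p z' θ' := by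
  have : Nonempty (Fin k) := Fin.pos_iff_nonempty.mp hk
  unfold SpE
  split_ifs with hpi
  · exact ciSup_mono (Set.finite_range _).bddAbove h
  · refine Real.rpow_le_rpow
      (Finset.sum_nonneg fun j _ => Real.rpow_nonneg (le_max_right _ _) _)
      (Finset.sum_le_sum fun j _ =>
        Real.rpow_le_rpow (le_max_right _ _) (h j) ENNReal.toReal_nonneg)
      (by positivity)

lemma aux_map (k : ℕ) (μ : Fin k → ℝ) :
    MeasurePreserving (fun z : Fin k → ℝ => fun i => z i + μ i)
      (gaussPi k fun _ => 0) (gaussPi k μ) :=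
  MeasureTheory.measurePreserving_pi _ _ fun i =>
    ⟨measurable_id.add_const _, by
      simpa using gaussianReal_map_add_const (μ := 0) (v := 1) (μ i)⟩

open Filter in
lemma aux_quantile (k : ℕ) (hk : 0 < k) (p : ℝ≥0∞) (α : ℝ) (hα : α ∈ Set.Ioo (0 : ℝ) 1) :
    (gaussPi k (fun _ => 0) (setOf (fun z =>
        quantile (gaussPi k (fun _ => 0)) (fun z => SpE k p z 0) (1 - α)
          < SpE k p z 0))).toReal ≤ α := by
  set P := gaussPi k (fun _ => 0) with hP
  set S : (Fin k → ℝ) → ℝ := fun z => SpE k p z 0 with hSdef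
  have hS : Measurable S := aux_measurable_SpE k hk p 0
  have hA : ∀ t : ℝ, MeasurableSet {z | S z ≤ t} :=
    fun t => measurableSet_le hS measurable_const
  set F : ℝ → ℝ := fun t => (P {z | S z ≤ t}).toReal with hFdef
  have hFmono : Monotone F := fun s t hst =>
    ENNReal.toReal_mono (measure_ne_top _ _)
      (measure_mono fun z hz => le_trans hz hst)
  set T := {t : ℝ | 1 - α ≤ F t} with hT
  -- T is nonempty
  have hTne : T.Nonempty := by
    have hun : (⋃ n : ℕ, {z : Fin k → ℝ | S z ≤ (n : ℝ)}) = Set.univ := by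
      ext z
      simp only [Set.mem_iUnion, Set.mem_setOf_eq, Set.mem_univ, iff_true]
      exact ⟨⌈S z⌉₊, Nat.le_ceil _⟩
    have h1 : Tendsto (fun n : ℕ => P {z | S z ≤ (n : ℝ)}) atTop
        (𝓝 (P (⋃ n : ℕ, {z : Fin k → ℝ | S z ≤ (n : ℝ)}))) :=
      tendsto_measure_iUnion_atTop
        (fun a b hab z hz => by
          simp only [Set.mem_setOf_eq] at hz ⊢
          exact le_trans hz (Nat.cast_le.mpr hab))
    rw [hun, measure_univ] at h1
    have h2 : Tendsto (fun n : ℕ => F (n : ℝ)) atTop (𝓝 1) := by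
      have := (ENNReal.tendsto_toReal (by norm_num : (1 : ℝ≥0∞) ≠ ∞)).comp h1
      exact this
    obtain ⟨n, hn⟩ :=
      (h2.eventually (eventually_ge_nhds (by linarith [hα.1] : 1 - α < 1))).exists
    exact ⟨(n : ℝ), hn⟩
  -- T is bounded below
  have hTbdd : BddBelow T := by
    have hint : (⋂ n : ℕ, {z : Fin k → ℝ | S z ≤ -(n : ℝ)}) = ∅ := by
      ext z
      simp only [Set.mem_iInter, Set.mem_setOf_eq, Set.mem_empty_iff_false, iff_false, not_forall]
      refine ⟨⌈-S z⌉₊ + 1, not_le.mpr ?_⟩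
      have := Nat.le_ceil (-S z)
      push_cast
      linarith
    have h1 : Tendsto (fun n : ℕ => P {z | S z ≤ -(n : ℝ)}) atTop
        (𝓝 (P (⋂ n : ℕ, {z : Fin k → ℝ | S z ≤ -(n : ℝ)}))) :=
      tendsto_measure_iInter_atTop (fun n => (hA _).nullMeasurableSet)
        (fun a b hab z hz => by
          simp only [Set.mem_setOf_eq] at hz ⊢
          exact le_trans hz (neg_le_neg (Nat.cast_le.mpr hab)))
        ⟨0, measure_ne_top _ _⟩
    rw [hint, measure_empty] at h1
    have h2 : Tendsto (fun n : ℕ => F (-(n : ℝ))) atTop (𝓝 0) := by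
      have := (ENNReal.tendsto_toReal (by norm_num : (0 : ℝ≥0∞) ≠ ∞)).comp h1
      exact this
    obtain ⟨n, hn⟩ :=
      (h2.eventually (eventually_lt_nhds (by linarith [hα.1, hα.2] : (0 : ℝ) < 1 - α))).exists
    refine ⟨-(n : ℝ), fun s hs => ?_⟩
    by_contra hlt
    push_neg at hlt
    exact absurd (le_trans hs (hFmono hlt.le)) (not_le.mpr hn)
  set c := quantile P S (1 - α) with hc
  have hcInf : c = sInf T := rfl
  -- 1 - α ≤ F c
  have hFc : 1 - α ≤ F c := by
    have hseq : ∀ n : ℕ, 1 - α ≤ F (c + 1 / ((n : ℝ) + 1)) := by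
      intro n
      have hlt : sInf T < c + 1 / ((n : ℝ) + 1) := by
        rw [← hcInf]; exact lt_add_of_pos_right c (by positivity)
      obtain ⟨s, hsT, hs⟩ := exists_lt_of_csInf_lt hTne hlt
      exact le_trans hsT (hFmono hs.le)
    have hanti : Antitone (fun n : ℕ => {z : Fin k → ℝ | S z ≤ c + 1 / ((n : ℝ) + 1)}) := by
      intro a b hab z hz
      have h1 : 1 / ((b : ℝ) + 1) ≤ 1 / ((a : ℝ) + 1) := by
        apply one_div_le_one_div_of_le (by positivity)
        have := (Nat.cast_le (α := ℝ)).mpr hab; linarith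
      simp only [Set.mem_setOf_eq] at hz ⊢
      linarith
    have hinter : (⋂ n : ℕ, {z : Fin k → ℝ | S z ≤ c + 1 / ((n : ℝ) + 1)})
        = {z | S z ≤ c} := by
      ext z
      simp only [Set.mem_iInter, Set.mem_setOf_eq]
      constructor
      · intro h
        have htend : Tendsto (fun n : ℕ => c + 1 / ((n : ℝ) + 1)) atTop (𝓝 c) := by
          have := tendsto_one_div_add_atTop_nhds_zero_nat (𝕜 := ℝ)
          simpa using tendsto_const_nhds.add this
        exact ge_of_tendsto htend (Eventually.of_forall h)
      · intro h n
        have : (0 : ℝ) < 1 / ((n : ℝ) + 1) := by positivity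
        linarith
    have h1 : Tendsto (fun n : ℕ => P {z | S z ≤ c + 1 / ((n : ℝ) + 1)}) atTop
        (𝓝 (P {z | S z ≤ c})) := by
      rw [← hinter]
      exact tendsto_measure_iInter_atTop (fun n => (hA _).nullMeasurableSet) hanti
        ⟨0, measure_ne_top _ _⟩
    have h2 : Tendsto (fun n : ℕ => F (c + 1 / ((n : ℝ) + 1))) atTop (𝓝 (F c)) :=
      (ENNReal.tendsto_toReal (measure_ne_top _ _)).comp h1
    exact ge_of_tendsto h2 (Eventually.of_forall hseq)
  -- conclusion
  have hcompl : (setOf (fun z : Fin k → ℝ => c < S z)) = {z | S z ≤ c}ᶜ := by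
    ext z; simp [not_le]; exact Iff.rfl
  have hval : (P (setOf (fun z : Fin k → ℝ => c < S z))).toReal = 1 - F c := by
    rw [hcompl, measure_compl (hA c) (measure_ne_top _ _), measure_univ,
      ENNReal.toReal_sub_of_le prob_le_one (by norm_num), ENNReal.toReal_one]
  calc (P (setOf (fun z : Fin k → ℝ => c < S z))).toReal = 1 - F c := hval
    _ ≤ α := by linarith

/-- The test rejecting when `S_p(Z, θ₀) > c_{p,α}` has size exactly
`P_0(S_p(Z,0) > c_{p,α}) ≤ α` over the null `{μ : min_j μ(j) ≥ θ₀}`. -/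
theorem stmt6 (k : ℕ) (hk : 0 < k) (p : ℝ≥0∞) (hp : 1 ≤ p) (θ₀ α : ℝ)
    (hα : α ∈ Set.Ioo (0 : ℝ) 1) :
    (⨆ μ ∈ setOf (fun μ : Fin k → ℝ => θ₀ ≤ thetaBar μ),
        (gaussPi k μ (setOf (fun z =>
          quantile (gaussPi k (fun _ => 0)) (fun z => SpE k p z 0) (1 - α)
            < SpE k p z θ₀))).toReal)
      = (gaussPi k (fun _ => 0) (setOf (fun z =>
          quantile (gaussPi k (fun _ => 0)) (fun z => SpE k p z 0) (1 - α)
            < SpE k p z 0))).toReal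
    ∧ (gaussPi k (fun _ => 0) (setOf (fun z =>
          quantile (gaussPi k (fun _ => 0)) (fun z => SpE k p z 0) (1 - α)
            < SpE k p z 0))).toReal ≤ α := by
  have hne : Nonempty (Fin k) := Fin.pos_iff_nonempty.mp hk
  set c := quantile (gaussPi k (fun _ => 0)) (fun z => SpE k p z 0) (1 - α) with hc
  set R := (gaussPi k (fun _ => 0) (setOf (fun z => c < SpE k p z 0))).toReal with hR
  have hRnn : 0 ≤ R := ENNReal.toReal_nonneg
  have hsetmeas : MeasurableSet (setOf (fun z : Fin k → ℝ => c < SpE k p z θ₀)) :=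
    measurableSet_lt measurable_const (aux_measurable_SpE k hk p θ₀)
  -- the rewriting by translation
  have hpull : ∀ μ : Fin k → ℝ,
      gaussPi k μ (setOf (fun z => c < SpE k p z θ₀))
        = gaussPi k (fun _ => 0)
            (setOf (fun ε : Fin k → ℝ => c < SpE k p (fun i => ε i + μ i) θ₀)) := by
    intro μ
    rw [← (aux_map k μ).map_eq, Measure.map_apply (aux_map k μ).measurable hsetmeas]
    rfl
  -- bound for every μ in the null
  have hle : ∀ μ : Fin k → ℝ, θ₀ ≤ thetaBar μ →
      (gaussPi k μ (setOf (fun z => c < SpE k p z θ₀))).toReal ≤ R := by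
    intro μ hμ
    rw [hpull μ]
    apply ENNReal.toReal_mono (measure_ne_top _ _)
    apply measure_mono
    intro ε hε
    change c < _ at hε; change c < _
    refine lt_of_lt_of_le hε (aux_SpE_mono k hk p ?_)
    intro j
    have hθμ : θ₀ ≤ μ j :=
      le_trans hμ (ciInf_le (Set.finite_range _).bddBelow j)
    exact max_le_max (by linarith) le_rfl
  -- equality for μ = const θ₀
  have hEq : (gaussPi k (fun _ => θ₀) (setOf (fun z => c < SpE k p z θ₀))).toReal = R := by
    rw [hpull]
    congr 2
    ext ε
    show c < _ ↔ c < _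
    have harg : SpE k p (fun i => ε i + θ₀) θ₀ = SpE k p ε 0 := by
      have h0 : ∀ j : Fin k, θ₀ - (ε j + θ₀) = 0 - ε j := fun j => by ring
      unfold SpE
      simp only [h0]
    rw [harg]
  have hmem : (fun _ : Fin k => θ₀) ∈ setOf (fun μ : Fin k → ℝ => θ₀ ≤ thetaBar μ) := by
    show θ₀ ≤ ⨅ _ : Fin k, θ₀
    rw [ciInf_const]
  constructor
  · apply le_antisymm
    · exact Real.iSup_le
        (fun μ => Real.iSup_le (fun hμ => hle μ hμ) hRnn) hRnn
    · have hbdd : BddAbove (Set.range fun μ : Fin k → ℝ =>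
          ⨆ _ : μ ∈ setOf (fun μ : Fin k → ℝ => θ₀ ≤ thetaBar μ),
            (gaussPi k μ (setOf (fun z => c < SpE k p z θ₀))).toReal) := by
        refine ⟨R, ?_⟩
        rintro x ⟨μ, rfl⟩
        exact Real.iSup_le (fun hμ => hle μ hμ) hRnn
      calc R = (gaussPi k (fun _ => θ₀) (setOf (fun z => c < SpE k p z θ₀))).toReal :=
            hEq.symm
        _ = ⨆ _ : (fun _ : Fin k => θ₀) ∈ setOf (fun μ : Fin k → ℝ => θ₀ ≤ thetaBar μ),
              (gaussPi k (fun _ => θ₀) (setOf (fun z => c < SpE k p z θ₀))).toReal := by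
            rw [ciSup_pos hmem]
        _ ≤ _ := le_ciSup hbdd _
  · exact aux_quantile k hk p α hα
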